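/- arXiv:1606.02805 — 4 statements merged into one kernel-verified Lean document; each statement's English description precedes it below -/
import Mathlib

section
/- Let k, Λ, a be real numbers. Suppose f : ℝ → ℝ is twice differentiable, h : (0,π) → ℝ is twice differentiable, and for all r ∈ ℝ and all θ ∈ (0,π) one has f''(r) + (1/sin θ)·d/dθ(h'(θ)/sin θ) = −(k−4Λ)(r² + a²cos²θ). Then there exist real constants C₁, C₂, C₃, C₄, C₅ such that f(r) = −(1/12)(k−4Λ)r⁴ + (1/2)C₁r² + C₂r + C₃ for all r ∈ ℝ and h(θ) = −(1/12)(k−4Λ)a²cos⁴θ − (1/2)C₁cos²θ − C₄cosθ + C₅ for all θ ∈ (0,π). -/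
/-!
Both sides of the equation are sums of a function of `r` and a function of `θ`, so each part
equals its counterpart on the right up to one shared constant `C₁`. Then `f'' = -(k - 4Λ) r² + C₁`
integrates twice to the quartic in `r`. On the angular side, `sin θ · P (cos θ)` is the derivative
of `-Q (cos θ)` whenever `Q' = P`, so `h' / sin θ` and then `h` are polynomials in `cos θ`.
-/

open Real Set

theorem exists_eq_add_of_hasDerivAt {s : Set ℝ} (hs : IsOpen s) (hs' : IsPreconnected s)
    {f g g' : ℝ → ℝ} (hf : ∀ x ∈ s, HasDerivAt f (g' x) x) (hg : ∀ x ∈ s, HasDerivAt g (g' x) x) :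
    ∃ C, ∀ x ∈ s, f x = g x + C :=
  hs.exists_eq_add_of_deriv_eq hs' (fun x hx ↦ (hf x hx).differentiableAt.differentiableWithinAt)
    (fun x hx ↦ (hg x hx).differentiableAt.differentiableWithinAt)
    (fun x hx ↦ by rw [(hf x hx).deriv, (hg x hx).deriv])

theorem exists_eq_add_and_eq_sub_of_add_eq {α β M : Type*} [AddCommGroup M] [Nonempty α]
    {F A : α → M} {G B : β → M} {s : Set β} (hs : s.Nonempty)
    (h : ∀ r, ∀ θ ∈ s, F r + G θ = A r + B θ) :
    ∃ C, (∀ r, F r = A r + C) ∧ ∀ θ ∈ s, G θ = B θ - C := by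
  obtain ⟨θ₀, hθ₀⟩ := hs
  have hF : ∀ r, F r = A r + (B θ₀ - G θ₀) := fun r ↦ by
    rw [← add_sub_assoc, ← h r θ₀ hθ₀, add_sub_cancel_right]
  refine ⟨B θ₀ - G θ₀, hF, fun θ hθ ↦ ?_⟩
  obtain ⟨r⟩ := ‹Nonempty α›
  have := h r θ hθ
  rw [hF r, add_assoc, add_right_inj] at this
  rw [eq_sub_iff_add_eq, add_comm, this]

theorem exists_eq_quartic_of_deriv_deriv {f : ℝ → ℝ} {c C₁ : ℝ} (hf : Differentiable ℝ f)
    (hf' : Differentiable ℝ (deriv f)) (hf'' : ∀ r, deriv (deriv f) r = -c * r ^ 2 + C₁) :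
    ∃ C₂ C₃ : ℝ, ∀ r, f r = -(1 / 12) * c * r ^ 4 + (1 / 2) * C₁ * r ^ 2 + C₂ * r + C₃ := by
  obtain ⟨C₂, hC₂⟩ := exists_eq_add_of_hasDerivAt isOpen_univ isPreconnected_univ
    (fun r _ ↦ hf'' r ▸ (hf' r).hasDerivAt)
    (g := fun r ↦ -(c / 3) * r ^ 3 + C₁ * r) fun r _ ↦
      (((hasDerivAt_pow 3 r).const_mul (-(c / 3))).add
        ((hasDerivAt_id r).const_mul C₁)).congr_deriv (by push_cast; ring)
  obtain ⟨C₃, hC₃⟩ := exists_eq_add_of_hasDerivAt isOpen_univ isPreconnected_univ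
    (fun r _ ↦ hC₂ r (mem_univ r) ▸ (hf r).hasDerivAt)
    (g := fun r ↦ -(1 / 12) * c * r ^ 4 + (1 / 2) * C₁ * r ^ 2 + C₂ * r) fun r _ ↦
      ((((hasDerivAt_pow 4 r).const_mul (-(1 / 12) * c)).add
        ((hasDerivAt_pow 2 r).const_mul ((1 / 2) * C₁))).add
        ((hasDerivAt_id r).const_mul C₂)).congr_deriv (by push_cast; ring)
  exact ⟨C₂, C₃, fun r ↦ hC₃ r (mem_univ r)⟩

theorem exists_eq_quartic_cos_of_deriv_div_sin {h : ℝ → ℝ} {b C₁ : ℝ}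
    (hh : ∀ θ ∈ Ioo 0 π, DifferentiableAt ℝ h θ)
    (hh' : ∀ θ ∈ Ioo 0 π, DifferentiableAt ℝ (deriv h) θ)
    (heq : ∀ θ ∈ Ioo 0 π,
      1 / sin θ * deriv (fun t ↦ deriv h t / sin t) θ = -b * cos θ ^ 2 - C₁) :
    ∃ C₄ C₅ : ℝ, ∀ θ ∈ Ioo 0 π,
      h θ = -(1 / 12) * b * cos θ ^ 4 - (1 / 2) * C₁ * cos θ ^ 2 - C₄ * cos θ + C₅ := by
  have hsin : ∀ θ ∈ Ioo 0 π, sin θ ≠ 0 := fun θ hθ ↦ (sin_pos_of_pos_of_lt_pi hθ.1 hθ.2).ne'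
  obtain ⟨C₄, hC₄⟩ := exists_eq_add_of_hasDerivAt isOpen_Ioo isPreconnected_Ioo
    (f := fun t ↦ deriv h t / sin t) (g' := fun θ ↦ sin θ * (-b * cos θ ^ 2 - C₁))
    (g := fun t ↦ b / 3 * cos t ^ 3 + C₁ * cos t)
    (fun θ hθ ↦ by
      rw [← heq θ hθ, ← mul_assoc, mul_one_div_cancel (hsin θ hθ), one_mul]
      exact ((hh' θ hθ).div differentiableAt_sin (hsin θ hθ)).hasDerivAt)
    fun θ _ ↦
      ((((hasDerivAt_cos θ).pow 3).const_mul (b / 3)).add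
        ((hasDerivAt_cos θ).const_mul C₁)).congr_deriv (by push_cast; ring)
  obtain ⟨C₅, hC₅⟩ := exists_eq_add_of_hasDerivAt isOpen_Ioo isPreconnected_Ioo
    (f := h) (g' := fun θ ↦ sin θ * (b / 3 * cos θ ^ 3 + C₁ * cos θ + C₄))
    (g := fun t ↦ -(1 / 12) * b * cos t ^ 4 - (1 / 2) * C₁ * cos t ^ 2 - C₄ * cos t)
    (fun θ hθ ↦ by
      have hderiv := hC₄ θ hθ
      rw [div_eq_iff (hsin θ hθ)] at hderiv
      rw [mul_comm, ← hderiv]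
      exact (hh θ hθ).hasDerivAt)
    fun θ _ ↦
      (((((hasDerivAt_cos θ).pow 4).const_mul (-(1 / 12) * b)).sub
        (((hasDerivAt_cos θ).pow 2).const_mul ((1 / 2) * C₁))).sub
        ((hasDerivAt_cos θ).const_mul C₄)).congr_deriv (by push_cast; ring)
  exact ⟨C₄, C₅, hC₅⟩

/-- Classification: if twice differentiable `f : ℝ → ℝ` and `h` on `(0,π)` satisfy
`f''(r) + (1/sin θ)·d/dθ(h'(θ)/sin θ) = -(k-4Λ)(r² + a²cos²θ)` for all `r` and all
`θ ∈ (0,π)`, then `f` and `h` are the quartic polynomials (38) of the paper. -/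
theorem stmt_3 (k Λ a : ℝ) (f h : ℝ → ℝ)
    (hf₁ : Differentiable ℝ f) (hf₂ : Differentiable ℝ (deriv f))
    (hh₁ : ∀ θ ∈ Set.Ioo (0 : ℝ) π, DifferentiableAt ℝ h θ)
    (hh₂ : ∀ θ ∈ Set.Ioo (0 : ℝ) π, DifferentiableAt ℝ (deriv h) θ)
    (heq : ∀ r : ℝ, ∀ θ ∈ Set.Ioo (0 : ℝ) π,
      deriv (deriv f) r
        + (1 / Real.sin θ) * deriv (fun t : ℝ => deriv h t / Real.sin t) θ
      = -(k - 4*Λ) * (r^2 + a^2 * Real.cos θ^2)) :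
    ∃ C₁ C₂ C₃ C₄ C₅ : ℝ,
      (∀ r : ℝ, f r = -(1/12) * (k - 4*Λ) * r^4 + (1/2) * C₁ * r^2 + C₂ * r + C₃) ∧
      (∀ θ ∈ Set.Ioo (0 : ℝ) π,
        h θ = -(1/12) * (k - 4*Λ) * a^2 * Real.cos θ^4 - (1/2) * C₁ * Real.cos θ^2
          - C₄ * Real.cos θ + C₅) := by
  obtain ⟨C₁, hf'', hh''⟩ := exists_eq_add_and_eq_sub_of_add_eq
    (A := fun r ↦ -(k - 4 * Λ) * r ^ 2) (B := fun θ ↦ -((k - 4 * Λ) * a ^ 2) * cos θ ^ 2)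
    ⟨π / 2, by constructor <;> linarith [pi_pos]⟩ fun r θ hθ ↦ (heq r θ hθ).trans (by ring)
  obtain ⟨C₂, C₃, hf⟩ := exists_eq_quartic_of_deriv_deriv hf₁ hf₂ hf''
  obtain ⟨C₄, C₅, hh⟩ := exists_eq_quartic_cos_of_deriv_div_sin hh₁ hh₂ hh''
  exact ⟨C₁, C₂, C₃, C₄, C₅, hf, fun θ hθ ↦ (hh θ hθ).trans (by ring)⟩
end

section
/- Let a, M be real numbers, define Δ_r(r) = r² − 2Mr + a² and Δ_θ(p) = 1 − p², and on the open set U = {(r,p) ∈ ℝ² : r² + a²p² ≠ 0} define Z(r,p) = (Δ_r(r) − a²Δ_θ(p))/(r² + a²p²) + i·2aMp/(r² + a²p²). Then Z satisfies the Ernst equation at every point of U: (Re Z)·(∂_r(Δ_r ∂_r Z) + ∂_p(Δ_θ ∂_p Z)) = Δ_r(∂_r Z)² + Δ_θ(∂_p Z)². -/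
open Real

/-- Partial derivative in the first (radial) coordinate of a complex-valued function. -/
noncomputable def pderivRC (F : ℝ × ℝ → ℂ) (x : ℝ × ℝ) : ℂ :=
  deriv (fun s : ℝ => F (s, x.2)) x.1

/-- Partial derivative in the second (angular) coordinate of a complex-valued function. -/
noncomputable def pderivPC (F : ℝ × ℝ → ℂ) (x : ℝ × ℝ) : ℂ :=
  deriv (fun t : ℝ => F (x.1, t)) x.2

/-!
On `U` the potential is the holomorphic function `Z = 1 - 2M/w` of the complex radius
`w = r + i a p`, so `∂_r Z = 2M/w²` and `∂_p Z = 2M·ia/w²`. Since `(r - i a p)·w = r² + a²p²`,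
the divergence term collapses to `4M²·w̄/w³`, while `Re Z = (Δ_r - a²Δ_θ)/(w w̄)`; both sides of
the Ernst equation are therefore `4M²(Δ_r - a²Δ_θ)/w⁴`.
-/

open Complex Filter Topology

noncomputable def kerrRadius (a : ℝ) (y : ℝ × ℝ) : ℂ := y.1 + a * y.2 * I

noncomputable def kerrErnst (a M : ℝ) (y : ℝ × ℝ) : ℂ := 1 - 2 * M / kerrRadius a y

namespace Filter.EventuallyEq

variable {F G : ℝ × ℝ → ℂ} {x : ℝ × ℝ}

lemma pderivRC_eq (h : F =ᶠ[𝓝 x] G) : pderivRC F x = pderivRC G x :=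
  (h.comp_tendsto (by fun_prop : Continuous fun s : ℝ => (s, x.2)).continuousAt).deriv_eq

lemma pderivPC_eq (h : F =ᶠ[𝓝 x] G) : pderivPC F x = pderivPC G x :=
  (h.comp_tendsto (by fun_prop : Continuous fun t : ℝ => (x.1, t)).continuousAt).deriv_eq

end Filter.EventuallyEq

section Derivatives

variable {𝕜 𝕜' : Type*} [NontriviallyNormedField 𝕜] [NontriviallyNormedField 𝕜']
  [NormedAlgebra 𝕜 𝕜']

lemma HasDerivAt.one_sub_div {w : 𝕜 → 𝕜'} {w' : 𝕜'} {t : 𝕜} (hw : HasDerivAt w w' t)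
    (h : w t ≠ 0) (c : 𝕜') :
    HasDerivAt (fun s => 1 - c / w s) (c * w' / w t ^ 2) t := by
  simp only [div_eq_mul_inv]
  exact (((hw.inv h).const_mul c).const_sub 1).congr_deriv (by ring)

lemma HasDerivAt.mul_div_sq {f w : 𝕜 → 𝕜'} {f' w' : 𝕜'} {t : 𝕜} (hf : HasDerivAt f f' t)
    (hw : HasDerivAt w w' t) (h : w t ≠ 0) (c : 𝕜') :
    HasDerivAt (fun s => f s * (c / w s ^ 2)) (c * (f' * w t - 2 * w' * f t) / w t ^ 3) t := by
  refine (hf.mul ((hasDerivAt_const t c).div (hw.pow 2) (pow_ne_zero 2 h))).congr_deriv ?_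
  simp only [Pi.div_apply, Pi.pow_apply]
  field_simp
  ring

end Derivatives

section Kerr

variable {a M : ℝ}

lemma kerrRadius_ne_zero_iff {y : ℝ × ℝ} :
    kerrRadius a y ≠ 0 ↔ y.1 ^ 2 + a ^ 2 * y.2 ^ 2 ≠ 0 := by
  rw [ne_eq, ne_eq, ← normSq_eq_zero, kerrRadius, ← ofReal_mul, normSq_add_mul_I, mul_pow]

lemma eventually_kerrRadius_ne_zero {y : ℝ × ℝ} (hy : kerrRadius a y ≠ 0) :
    ∀ᶠ z in 𝓝 y, kerrRadius a z ≠ 0 :=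
  (show Continuous (kerrRadius a) by unfold kerrRadius; fun_prop).continuousAt.eventually_ne hy

lemma hasDerivAt_kerrRadius_fst (y : ℝ × ℝ) :
    HasDerivAt (fun s : ℝ => kerrRadius a (s, y.2)) 1 y.1 := by
  simpa [kerrRadius] using (hasDerivAt_id y.1).ofReal_comp.add_const (a * y.2 * I : ℂ)

lemma hasDerivAt_kerrRadius_snd (y : ℝ × ℝ) :
    HasDerivAt (fun t : ℝ => kerrRadius a (y.1, t)) (a * I) y.2 := by
  simpa [kerrRadius] using
    (((hasDerivAt_id y.2).ofReal_comp.const_mul (a : ℂ)).mul_const I).const_add (y.1 : ℂ)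

lemma kerrErnst_eq {y : ℝ × ℝ} (hy : kerrRadius a y ≠ 0) :
    kerrErnst a M y
      = (((y.1 ^ 2 - 2 * M * y.1 + a ^ 2 - a ^ 2 * (1 - y.2 ^ 2))
            / (y.1 ^ 2 + a ^ 2 * y.2 ^ 2) : ℝ) : ℂ)
        + I * ((2 * a * M * y.2 / (y.1 ^ 2 + a ^ 2 * y.2 ^ 2) : ℝ) : ℂ) := by
  have hρ : ((y.1 ^ 2 + a ^ 2 * y.2 ^ 2 : ℝ) : ℂ) ≠ 0 :=
    ofReal_ne_zero.2 (kerrRadius_ne_zero_iff.1 hy)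
  unfold kerrErnst kerrRadius at *
  push_cast at *
  field_simp
  linear_combination (-2 * M * a ^ 2 * y.2 ^ 2) * I_sq

lemma pderivRC_kerrErnst {y : ℝ × ℝ} (hy : kerrRadius a y ≠ 0) :
    pderivRC (kerrErnst a M) y = 2 * M / kerrRadius a y ^ 2 :=
  ((hasDerivAt_kerrRadius_fst y).one_sub_div hy (2 * M)).deriv.trans (by rw [mul_one])

lemma pderivPC_kerrErnst {y : ℝ × ℝ} (hy : kerrRadius a y ≠ 0) :
    pderivPC (kerrErnst a M) y = 2 * M * (a * I) / kerrRadius a y ^ 2 :=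
  ((hasDerivAt_kerrRadius_snd y).one_sub_div hy (2 * M)).deriv

lemma pderivRC_kerr_radial_flux {x : ℝ × ℝ} (hx : kerrRadius a x ≠ 0) :
    pderivRC (fun y => ((y.1 ^ 2 - 2 * M * y.1 + a ^ 2 : ℝ) : ℂ) *
        (2 * M / kerrRadius a y ^ 2)) x
      = 2 * M * ((2 * x.1 - 2 * M) * kerrRadius a x
          - 2 * ((x.1 ^ 2 - 2 * M * x.1 + a ^ 2 : ℝ) : ℂ)) / kerrRadius a x ^ 3 := by
  have hΔr : HasDerivAt (fun s : ℝ => ((s ^ 2 - 2 * M * s + a ^ 2 : ℝ) : ℂ))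
      (2 * x.1 - 2 * M) x.1 := by
    refine (((hasDerivAt_pow 2 x.1).sub ((hasDerivAt_id x.1).const_mul (2 * M))).add_const
      (a ^ 2)).ofReal_comp.congr_deriv ?_
    push_cast
    ring
  exact (hΔr.mul_div_sq (hasDerivAt_kerrRadius_fst x) hx (2 * M)).deriv.trans (by ring)

lemma pderivPC_kerr_angular_flux {x : ℝ × ℝ} (hx : kerrRadius a x ≠ 0) :
    pderivPC (fun y => ((1 - y.2 ^ 2 : ℝ) : ℂ) * (2 * M * (a * I) / kerrRadius a y ^ 2)) x
      = 2 * M * (a * I) * (-2 * x.2 * kerrRadius a x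
          - 2 * (a * I) * ((1 - x.2 ^ 2 : ℝ) : ℂ)) / kerrRadius a x ^ 3 := by
  have hΔθ : HasDerivAt (fun t : ℝ => ((1 - t ^ 2 : ℝ) : ℂ)) (-2 * x.2) x.2 := by
    refine ((hasDerivAt_pow 2 x.2).const_sub 1).ofReal_comp.congr_deriv ?_
    push_cast
    ring
  exact (hΔθ.mul_div_sq (hasDerivAt_kerrRadius_snd x) hx (2 * M * (a * I))).deriv

lemma kerr_ernst_equation_identity {r p : ℝ} (hw : kerrRadius a (r, p) ≠ 0) :
    (((r ^ 2 - 2 * M * r + a ^ 2 - a ^ 2 * (1 - p ^ 2)) / (r ^ 2 + a ^ 2 * p ^ 2) : ℝ) : ℂ) *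
        (2 * M * ((2 * r - 2 * M) * kerrRadius a (r, p)
            - 2 * ((r ^ 2 - 2 * M * r + a ^ 2 : ℝ) : ℂ)) / kerrRadius a (r, p) ^ 3
          + 2 * M * (a * I) * (-2 * p * kerrRadius a (r, p)
            - 2 * (a * I) * ((1 - p ^ 2 : ℝ) : ℂ)) / kerrRadius a (r, p) ^ 3)
      = ((r ^ 2 - 2 * M * r + a ^ 2 : ℝ) : ℂ) * (2 * M / kerrRadius a (r, p) ^ 2) ^ 2
        + ((1 - p ^ 2 : ℝ) : ℂ) * (2 * M * (a * I) / kerrRadius a (r, p) ^ 2) ^ 2 := by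
  have hρ : ((r ^ 2 + a ^ 2 * p ^ 2 : ℝ) : ℂ) ≠ 0 :=
    ofReal_ne_zero.2 (kerrRadius_ne_zero_iff.1 hw)
  unfold kerrRadius at *
  push_cast at *
  have hflux : (2 * r - 2 * M) * (r + a * p * I) - 2 * (r ^ 2 - 2 * M * r + a ^ 2)
      + a * I * (-2 * p * (r + a * p * I) - 2 * (a * I) * (1 - p ^ 2))
        = 2 * M * (r - a * p * I) := by
    linear_combination (-2 * a ^ 2) * I_sq
  have hρw : (r ^ 2 + a ^ 2 * p ^ 2 : ℂ) = (r + a * p * I) * (r - a * p * I) := by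
    linear_combination (a ^ 2 * p ^ 2) * I_sq
  have hw' : (r - a * p * I : ℂ) ≠ 0 := right_ne_zero_of_mul (hρw ▸ hρ)
  calc _ = (r ^ 2 - 2 * M * r + a ^ 2 - a ^ 2 * (1 - p ^ 2)) / ((r + a * p * I) * (r - a * p * I))
          * (2 * M * (2 * M * (r - a * p * I)) / (r + a * p * I) ^ 3) := by
        rw [← hflux, hρw]; ring
    _ = _ := by simp only [div_pow, mul_pow, I_sq]; field_simp; ring

end Kerr

/-- The conjugate Ernst potential of the Kerr solution,
`Z = (Δ_r - a²Δ_θ)/(r² + a²p²) + i·2aMp/(r² + a²p²)` with `Δ_r = r² - 2Mr + a²`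
and `Δ_θ = 1 - p²`, satisfies the Ernst equation wherever `r² + a²p² ≠ 0`. -/
theorem stmt_7 (a M : ℝ) (Δr Δθ : ℝ → ℝ)
    (hΔr : ∀ r : ℝ, Δr r = r^2 - 2*M*r + a^2)
    (hΔθ : ∀ p : ℝ, Δθ p = 1 - p^2)
    (Z : ℝ × ℝ → ℂ)
    (hZ : ∀ x : ℝ × ℝ,
      Z x = (((Δr x.1 - a^2 * Δθ x.2) / (x.1^2 + a^2 * x.2^2) : ℝ) : ℂ)
        + Complex.I * ((2*a*M*x.2 / (x.1^2 + a^2 * x.2^2) : ℝ) : ℂ))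
    (x : ℝ × ℝ) (hx : x.1^2 + a^2 * x.2^2 ≠ 0) :
    ((Z x).re : ℂ) *
        (pderivRC (fun y => (Δr y.1 : ℂ) * pderivRC Z y) x
          + pderivPC (fun y => (Δθ y.2 : ℂ) * pderivPC Z y) x)
      = (Δr x.1 : ℂ) * (pderivRC Z x)^2 + (Δθ x.2 : ℂ) * (pderivPC Z x)^2 := by
  obtain rfl : Δr = fun r => r ^ 2 - 2 * M * r + a ^ 2 := funext hΔr
  obtain rfl : Δθ = fun p => 1 - p ^ 2 := funext hΔθ
  beta_reduce at hZ ⊢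
  have hw : kerrRadius a x ≠ 0 := kerrRadius_ne_zero_iff.2 hx
  have hZK : ∀ y, kerrRadius a y ≠ 0 → Z =ᶠ[𝓝 y] kerrErnst a M := fun y hy =>
    (eventually_kerrRadius_ne_zero hy).mono fun z hz => by rw [hZ, kerrErnst_eq hz]
  have hZr : pderivRC Z =ᶠ[𝓝 x] fun y => 2 * M / kerrRadius a y ^ 2 :=
    (eventually_kerrRadius_ne_zero hw).mono fun y hy =>
      (hZK y hy).pderivRC_eq.trans (pderivRC_kerrErnst hy)
  have hZp : pderivPC Z =ᶠ[𝓝 x] fun y => 2 * M * (a * I) / kerrRadius a y ^ 2 :=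
    (eventually_kerrRadius_ne_zero hw).mono fun y hy =>
      (hZK y hy).pderivPC_eq.trans (pderivPC_kerrErnst hy)
  have hre : (Z x).re = (x.1 ^ 2 - 2 * M * x.1 + a ^ 2 - a ^ 2 * (1 - x.2 ^ 2))
      / (x.1 ^ 2 + a ^ 2 * x.2 ^ 2) := by
    rw [hZ, add_re, ofReal_re, re_mul_ofReal, I_re, zero_mul, add_zero]
  have hr :
      pderivRC (fun y => ((y.1 ^ 2 - 2 * M * y.1 + a ^ 2 : ℝ) : ℂ) * pderivRC Z y) x = _ :=
    ((EventuallyEq.refl _ _).mul hZr).pderivRC_eq.trans (pderivRC_kerr_radial_flux hw)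
  have hp : pderivPC (fun y => ((1 - y.2 ^ 2 : ℝ) : ℂ) * pderivPC Z y) x = _ :=
    ((EventuallyEq.refl _ _).mul hZp).pderivPC_eq.trans (pderivPC_kerr_angular_flux hw)
  rw [hr, hp, hre, hZr.self_of_nhds, hZp.self_of_nhds]
  exact kerr_ernst_equation_identity hw
end

section
/- Let a, M, Λ be real numbers, define Δ_r(r) = −(Λ/3)r²(r²+a²) + r² − 2Mr + a², Δ_θ(p) = (1 + (Λ/3)a²p²)(1 − p²), ρ²(r,p) = r² + a²p², D(r,p) = Δ_r(r) − a²Δ_θ(p), Φ̃(r,p) = 2aMp/ρ² − (2Λ/3)·a·r·p, and ω̃(r,p) = a·((r²+a²)Δ_θ(p) − (1−p²)Δ_r(r))/D(r,p). Then at every point (r,p) with ρ²(r,p) ≠ 0, D(r,p) ≠ 0, Δ_r(r) ≠ 0 and Δ_θ(p) ≠ 0, the twist-potential relations hold: ∂_r Φ̃ = (D²/(ρ⁴·Δ_r))·∂_p ω̃ and ∂_p Φ̃ = −(D²/(ρ⁴·Δ_θ))·∂_r ω̃. -/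
open Real

/-- Partial derivative in the first (radial) coordinate. -/
noncomputable def pderivR (F : ℝ × ℝ → ℝ) (x : ℝ × ℝ) : ℝ :=
  deriv (fun s : ℝ => F (s, x.2)) x.1

/-- Partial derivative in the second (angular) coordinate. -/
noncomputable def pderivP (F : ℝ × ℝ → ℝ) (x : ℝ × ℝ) : ℝ :=
  deriv (fun t : ℝ => F (x.1, t)) x.2

/-- The twist-potential relations for the Kerr–(anti-)de Sitter conjugate potential:
with Carter's `Δ_r`, `Δ_θ` (in the variable `p = cos θ`), `ρ² = r² + a²p²`,
`D = Δ_r − a²Δ_θ`, `Φ̃ = 2aMp/ρ² − (2Λ/3)arp` and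
`ω̃ = a((r²+a²)Δ_θ − (1−p²)Δ_r)/D`, one has
`∂_r Φ̃ = (D²/(ρ⁴Δ_r))·∂_p ω̃` and `∂_p Φ̃ = −(D²/(ρ⁴Δ_θ))·∂_r ω̃`
wherever `ρ² ≠ 0`, `D ≠ 0`, `Δ_r ≠ 0`, `Δ_θ ≠ 0`. -/
theorem stmt_11 (a M Λ : ℝ) (Δr Δθ : ℝ → ℝ)
    (hΔr : ∀ r : ℝ, Δr r = -(Λ/3) * r^2 * (r^2 + a^2) + r^2 - 2*M*r + a^2)
    (hΔθ : ∀ p : ℝ, Δθ p = (1 + (Λ/3) * a^2 * p^2) * (1 - p^2))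
    (Φ ω : ℝ × ℝ → ℝ)
    (hΦ : ∀ x : ℝ × ℝ,
      Φ x = 2*a*M*x.2 / (x.1^2 + a^2 * x.2^2) - (2*Λ/3) * a * x.1 * x.2)
    (hω : ∀ x : ℝ × ℝ,
      ω x = a * ((x.1^2 + a^2) * Δθ x.2 - (1 - x.2^2) * Δr x.1)
        / (Δr x.1 - a^2 * Δθ x.2))
    (x : ℝ × ℝ)
    (hρ : x.1^2 + a^2 * x.2^2 ≠ 0)
    (hD : Δr x.1 - a^2 * Δθ x.2 ≠ 0)
    (hr : Δr x.1 ≠ 0) (hp : Δθ x.2 ≠ 0) :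
    pderivR Φ x
      = ((Δr x.1 - a^2 * Δθ x.2)^2 / ((x.1^2 + a^2 * x.2^2)^2 * Δr x.1)) * pderivP ω x ∧
    pderivP Φ x
      = -((Δr x.1 - a^2 * Δθ x.2)^2 / ((x.1^2 + a^2 * x.2^2)^2 * Δθ x.2)) * pderivR ω x := by
  obtain ⟨r, p⟩ := x
  simp only at hρ hD hr hp ⊢
  simp only [hΔr, hΔθ] at hD hr hp ⊢
  -- abbreviations for the structure functions in polynomial form
  set Tθ : ℝ := (1 + (Λ/3) * a^2 * p^2) * (1 - p^2) with hT
  set Rr : ℝ := -(Λ/3) * r^2 * (r^2 + a^2) + r^2 - 2*M*r + a^2 with hRR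
  -- the four partial derivatives, via HasDerivAt
  have hΦR : HasDerivAt (fun s : ℝ => 2*a*M*p / (s^2 + a^2 * p^2) - (2*Λ/3) * a * s * p)
      ((0 * (r^2 + a^2*p^2) - 2*a*M*p * (↑(2:ℕ) * r^(2-1))) / (r^2 + a^2*p^2)^2
        - (2*Λ/3) * a * 1 * p) r := by
    exact ((hasDerivAt_const r (2*a*M*p)).div ((hasDerivAt_pow 2 r).add_const (a^2*p^2)) hρ).sub
      (((hasDerivAt_id' (𝕜 := ℝ) r).const_mul ((2*Λ/3) * a)).mul_const p)
  have hΦP : HasDerivAt (fun t : ℝ => 2*a*M*t / (r^2 + a^2 * t^2) - (2*Λ/3) * a * r * t)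
      ((2*a*M * 1 * (r^2 + a^2*p^2) - 2*a*M*p * (a^2 * (↑(2:ℕ) * p^(2-1)))) / (r^2 + a^2*p^2)^2
        - (2*Λ/3) * a * r * 1) p := by
    exact (((hasDerivAt_id' (𝕜 := ℝ) p).const_mul (2*a*M)).div
        (((hasDerivAt_pow 2 p).const_mul (a^2)).const_add (r^2)) hρ).sub
      ((hasDerivAt_id' (𝕜 := ℝ) p).const_mul ((2*Λ/3) * a * r))
  have hRd : HasDerivAt (fun u : ℝ => -(Λ/3) * u^2 * (u^2 + a^2) + u^2 - 2*M*u + a^2)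
      (((-(Λ/3) * (↑(2:ℕ) * r^(2-1))) * (r^2 + a^2) + (-(Λ/3) * r^2) * (↑(2:ℕ) * r^(2-1)))
        + ↑(2:ℕ) * r^(2-1) - 2*M * 1) r := by
    exact (((((hasDerivAt_pow 2 r).const_mul (-(Λ/3))).mul
        ((hasDerivAt_pow 2 r).add_const (a^2))).add (hasDerivAt_pow 2 r)).sub
      ((hasDerivAt_id' (𝕜 := ℝ) r).const_mul (2*M))).add_const (a^2)
  have hΘd : HasDerivAt (fun t : ℝ => (1 + (Λ/3) * a^2 * t^2) * (1 - t^2))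
      (((Λ/3) * a^2 * (↑(2:ℕ) * p^(2-1))) * (1 - p^2)
        + (1 + (Λ/3) * a^2 * p^2) * (-(↑(2:ℕ) * p^(2-1)))) p := by
    exact (((hasDerivAt_pow 2 p).const_mul ((Λ/3) * a^2)).const_add 1).mul
      ((hasDerivAt_pow 2 p).const_sub 1)
  have hωR : HasDerivAt
      (fun s : ℝ => a * ((s^2 + a^2) * Tθ - (1 - p^2) *
          (-(Λ/3) * s^2 * (s^2 + a^2) + s^2 - 2*M*s + a^2)) /
        ((-(Λ/3) * s^2 * (s^2 + a^2) + s^2 - 2*M*s + a^2) - a^2 * Tθ))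
      ((a * ((↑(2:ℕ) * r^(2-1)) * Tθ - (1 - p^2) *
          (((-(Λ/3) * (↑(2:ℕ) * r^(2-1))) * (r^2 + a^2) + (-(Λ/3) * r^2) * (↑(2:ℕ) * r^(2-1)))
            + ↑(2:ℕ) * r^(2-1) - 2*M * 1)) * (Rr - a^2 * Tθ)
        - a * ((r^2 + a^2) * Tθ - (1 - p^2) * Rr) *
          (((-(Λ/3) * (↑(2:ℕ) * r^(2-1))) * (r^2 + a^2) + (-(Λ/3) * r^2) * (↑(2:ℕ) * r^(2-1)))
            + ↑(2:ℕ) * r^(2-1) - 2*M * 1)) / (Rr - a^2 * Tθ)^2) r := by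
    exact (((((hasDerivAt_pow 2 r).add_const (a^2)).mul_const Tθ).sub
        (hRd.const_mul (1 - p^2))).const_mul a).div (hRd.sub_const (a^2 * Tθ)) hD
  have hωP : HasDerivAt
      (fun t : ℝ => a * ((r^2 + a^2) * ((1 + (Λ/3) * a^2 * t^2) * (1 - t^2)) - (1 - t^2) * Rr) /
        (Rr - a^2 * ((1 + (Λ/3) * a^2 * t^2) * (1 - t^2))))
      ((a * ((r^2 + a^2) * (((Λ/3) * a^2 * (↑(2:ℕ) * p^(2-1))) * (1 - p^2)
            + (1 + (Λ/3) * a^2 * p^2) * (-(↑(2:ℕ) * p^(2-1))))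
          - (-(↑(2:ℕ) * p^(2-1))) * Rr) * (Rr - a^2 * Tθ)
        - a * ((r^2 + a^2) * Tθ - (1 - p^2) * Rr) *
          (-(a^2 * (((Λ/3) * a^2 * (↑(2:ℕ) * p^(2-1))) * (1 - p^2)
            + (1 + (Λ/3) * a^2 * p^2) * (-(↑(2:ℕ) * p^(2-1))))))) / (Rr - a^2 * Tθ)^2) p := by
    exact (((hΘd.const_mul (r^2 + a^2)).sub
        (((hasDerivAt_pow 2 p).const_sub 1).mul_const Rr)).const_mul a).div
      ((hΘd.const_mul (a^2)).const_sub Rr) hD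
  have eΦR : (fun s : ℝ => Φ (s, p))
      = fun s : ℝ => 2*a*M*p / (s^2 + a^2 * p^2) - (2*Λ/3) * a * s * p := by
    funext s; rw [hΦ]
  have eΦP : (fun t : ℝ => Φ (r, t))
      = fun t : ℝ => 2*a*M*t / (r^2 + a^2 * t^2) - (2*Λ/3) * a * r * t := by
    funext t; rw [hΦ]
  have eωR : (fun s : ℝ => ω (s, p))
      = fun s : ℝ => a * ((s^2 + a^2) * Tθ - (1 - p^2) *
          (-(Λ/3) * s^2 * (s^2 + a^2) + s^2 - 2*M*s + a^2)) /
        ((-(Λ/3) * s^2 * (s^2 + a^2) + s^2 - 2*M*s + a^2) - a^2 * Tθ) := by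
    funext s; rw [hω, hΔr, hΔθ]
  have eωP : (fun t : ℝ => ω (r, t))
      = fun t : ℝ => a * ((r^2 + a^2) * ((1 + (Λ/3) * a^2 * t^2) * (1 - t^2)) - (1 - t^2) * Rr) /
        (Rr - a^2 * ((1 + (Λ/3) * a^2 * t^2) * (1 - t^2))) := by
    funext t; rw [hω, hΔr, hΔθ]
  have hρ2 : ((r:ℝ)^2 + a^2 * p^2)^2 ≠ 0 := pow_ne_zero _ hρ
  have hD2 : ((Rr : ℝ) - a^2 * Tθ)^2 ≠ 0 := pow_ne_zero _ hD
  refine ⟨?_, ?_⟩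
  · show deriv (fun s : ℝ => Φ (s, p)) r = _ * deriv (fun t : ℝ => ω (r, t)) p
    rw [eΦR, eωP, hΦR.deriv, hωP.deriv]
    field_simp
    ring
  · show deriv (fun t : ℝ => Φ (r, t)) p = _ * deriv (fun s : ℝ => ω (s, p)) r
    rw [eΦP, eωR, hΦP.deriv, hωR.deriv]
    field_simp
    ring
end

section
/- Let U ⊆ ℝ² be open, let Δ_r : ℝ → ℝ and Δ_θ : ℝ → ℝ be differentiable, let g : U → ℝ be continuously differentiable, let ω : U → ℝ be twice continuously differentiable, and suppose that g(r,p)·Δ_r(r)·Δ_θ(p) > 0 for all (r,p) ∈ U; set Ψ(r,p) := √(g(r,p)·Δ_r(r)·Δ_θ(p)). Suppose Φ : U → ℝ is differentiable with ∂_r Φ = g·Δ_θ·∂_p ω and ∂_p Φ = −g·Δ_r·∂_r ω on U. Then at every point of U: Ψ·(∂_r(Δ_r·∂_r Φ) + ∂_p(Δ_θ·∂_p Φ)) = 2Δ_r·(∂_rΨ)(∂_rΦ) + 2Δ_θ·(∂_pΨ)(∂_pΦ). -/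
open Real

/-! With `q = g Δ_r Δ_θ = Ψ²`, the twist relations say `Δ_r ∂_r Φ = q ∂_p ω` and
`Δ_θ ∂_p Φ = -q ∂_r ω`, so the divergence on the left is `∂_r q ∂_p ω - ∂_p q ∂_r ω`: the mixed
second derivatives of `ω` cancel by symmetry. On the right `∂Ψ = ∂q / (2Ψ)`, and both sides
become `Ψ (∂_r q ∂_p ω - ∂_p q ∂_r ω)`. -/

section PartialDerivatives

variable {F G : ℝ × ℝ → ℝ} {x : ℝ × ℝ}

theorem DifferentiableAt.hasDerivAt_pderivR (hF : DifferentiableAt ℝ F x) :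
    HasDerivAt (fun s => F (s, x.2)) (pderivR F x) x.1 :=
  (hF.comp x.1 (differentiableAt_id.prodMk (differentiableAt_const _))).hasDerivAt

theorem DifferentiableAt.hasDerivAt_pderivP (hF : DifferentiableAt ℝ F x) :
    HasDerivAt (fun t => F (x.1, t)) (pderivP F x) x.2 :=
  (hF.comp x.2 ((differentiableAt_const _).prodMk differentiableAt_id)).hasDerivAt

theorem pderivR_eq_fderiv (hF : DifferentiableAt ℝ F x) : pderivR F x = fderiv ℝ F x (1, 0) :=
  (hF.hasFDerivAt.comp_hasDerivAt x.1
    ((hasDerivAt_id x.1).prodMk (hasDerivAt_const x.1 x.2))).deriv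

theorem pderivP_eq_fderiv (hF : DifferentiableAt ℝ F x) : pderivP F x = fderiv ℝ F x (0, 1) :=
  (hF.hasFDerivAt.comp_hasDerivAt x.2
    ((hasDerivAt_const x.2 x.1).prodMk (hasDerivAt_id x.2))).deriv

theorem Filter.EventuallyEq.pderivR_eq (h : F =ᶠ[nhds x] G) : pderivR F x = pderivR G x :=
  (h.comp_tendsto ((continuous_id.prodMk continuous_const).tendsto' x.1 x rfl)).deriv_eq

theorem Filter.EventuallyEq.pderivP_eq (h : F =ᶠ[nhds x] G) : pderivP F x = pderivP G x :=
  (h.comp_tendsto ((continuous_const.prodMk continuous_id).tendsto' x.2 x rfl)).deriv_eq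

theorem pderivR_mul (hF : DifferentiableAt ℝ F x) (hG : DifferentiableAt ℝ G x) :
    pderivR (fun y => F y * G y) x = pderivR F x * G x + F x * pderivR G x :=
  (hF.hasDerivAt_pderivR.mul hG.hasDerivAt_pderivR).deriv

theorem pderivP_mul (hF : DifferentiableAt ℝ F x) (hG : DifferentiableAt ℝ G x) :
    pderivP (fun y => F y * G y) x = pderivP F x * G x + F x * pderivP G x :=
  (hF.hasDerivAt_pderivP.mul hG.hasDerivAt_pderivP).deriv

theorem pderivP_neg : pderivP (fun y => -F y) x = -pderivP F x :=
  deriv.neg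

theorem pderivR_sqrt (hF : DifferentiableAt ℝ F x) (hx : F x ≠ 0) :
    pderivR (fun y => √(F y)) x = pderivR F x / (2 * √(F x)) :=
  (hF.hasDerivAt_pderivR.sqrt hx).deriv

theorem pderivP_sqrt (hF : DifferentiableAt ℝ F x) (hx : F x ≠ 0) :
    pderivP (fun y => √(F y)) x = pderivP F x / (2 * √(F x)) :=
  (hF.hasDerivAt_pderivP.sqrt hx).deriv

end PartialDerivatives

section MixedPartials

variable {ω : ℝ × ℝ → ℝ} {x : ℝ × ℝ}

theorem ContDiffAt.pderivR_eventuallyEq (hω : ContDiffAt ℝ 2 ω x) :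
    pderivR ω =ᶠ[nhds x] fun y => fderiv ℝ ω y (1, 0) := by
  filter_upwards [hω.eventually (by simp)] with y hy
  exact pderivR_eq_fderiv (hy.differentiableAt two_ne_zero)

theorem ContDiffAt.pderivP_eventuallyEq (hω : ContDiffAt ℝ 2 ω x) :
    pderivP ω =ᶠ[nhds x] fun y => fderiv ℝ ω y (0, 1) := by
  filter_upwards [hω.eventually (by simp)] with y hy
  exact pderivP_eq_fderiv (hy.differentiableAt two_ne_zero)

theorem ContDiffAt.differentiableAt_fderiv (hω : ContDiffAt ℝ 2 ω x) :
    DifferentiableAt ℝ (fderiv ℝ ω) x :=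
  (hω.fderiv_right (m := 1) (by norm_num)).differentiableAt one_ne_zero

theorem ContDiffAt.differentiableAt_pderivR (hω : ContDiffAt ℝ 2 ω x) :
    DifferentiableAt ℝ (pderivR ω) x :=
  (hω.differentiableAt_fderiv.clm_apply (differentiableAt_const _)).congr_of_eventuallyEq
    hω.pderivR_eventuallyEq

theorem ContDiffAt.differentiableAt_pderivP (hω : ContDiffAt ℝ 2 ω x) :
    DifferentiableAt ℝ (pderivP ω) x :=
  (hω.differentiableAt_fderiv.clm_apply (differentiableAt_const _)).congr_of_eventuallyEq
    hω.pderivP_eventuallyEq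

theorem ContDiffAt.pderivR_pderivP_comm (hω : ContDiffAt ℝ 2 ω x) :
    pderivR (pderivP ω) x = pderivP (pderivR ω) x := by
  have hD := hω.differentiableAt_fderiv
  rw [hω.pderivP_eventuallyEq.pderivR_eq, hω.pderivR_eventuallyEq.pderivP_eq,
    pderivR_eq_fderiv (hD.clm_apply (differentiableAt_const _)),
    pderivP_eq_fderiv (hD.clm_apply (differentiableAt_const _)),
    fderiv_clm_apply hD (differentiableAt_const _), fderiv_clm_apply hD (differentiableAt_const _)]
  simpa using (hω.isSymmSndFDerivAt (by simp)).eq (1, 0) (0, 1)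

end MixedPartials

theorem pderivR_mul_pderivP_sub_pderivP_mul_pderivR {q ω : ℝ × ℝ → ℝ} {x : ℝ × ℝ}
    (hq : DifferentiableAt ℝ q x) (hω : ContDiffAt ℝ 2 ω x) :
    pderivR (fun y => q y * pderivP ω y) x - pderivP (fun y => q y * pderivR ω y) x
      = pderivR q x * pderivP ω x - pderivP q x * pderivR ω x := by
  rw [pderivR_mul hq hω.differentiableAt_pderivP, pderivP_mul hq hω.differentiableAt_pderivR,
    hω.pderivR_pderivP_comm]
  ring

theorem stmt_12_general (U : Set (ℝ × ℝ)) (hU : IsOpen U)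
    (Δr Δθ : ℝ → ℝ) (hΔr : Differentiable ℝ Δr) (hΔθ : Differentiable ℝ Δθ)
    (g : ℝ × ℝ → ℝ) (hg : ContDiffOn ℝ 1 g U)
    (ω : ℝ × ℝ → ℝ) (hω : ContDiffOn ℝ 2 ω U)
    (hpos : ∀ x ∈ U, 0 < g x * Δr x.1 * Δθ x.2)
    (Ψ : ℝ × ℝ → ℝ) (hΨ : ∀ x : ℝ × ℝ, Ψ x = Real.sqrt (g x * Δr x.1 * Δθ x.2))
    (Φ : ℝ × ℝ → ℝ)
    (hΦr : ∀ x ∈ U, pderivR Φ x = g x * Δθ x.2 * pderivP ω x)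
    (hΦp : ∀ x ∈ U, pderivP Φ x = -(g x * Δr x.1 * pderivR ω x)) :
    ∀ x ∈ U,
      Ψ x * (pderivR (fun y => Δr y.1 * pderivR Φ y) x
          + pderivP (fun y => Δθ y.2 * pderivP Φ y) x)
        = 2 * Δr x.1 * pderivR Ψ x * pderivR Φ x
          + 2 * Δθ x.2 * pderivP Ψ x * pderivP Φ x := by
  intro x hx
  have hxU : U ∈ nhds x := hU.mem_nhds hx
  set q : ℝ × ℝ → ℝ := fun y => g y * Δr y.1 * Δθ y.2
  have hq : DifferentiableAt ℝ q x :=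
    (((hg.differentiableOn one_ne_zero).differentiableAt hxU).mul
      ((hΔr _).comp x differentiableAt_fst)).mul ((hΔθ _).comp x differentiableAt_snd)
  have hqx : q x ≠ 0 := (hpos x hx).ne'
  have hΨq : Ψ = fun y => √(q y) := funext hΨ
  have hr : (fun y => Δr y.1 * pderivR Φ y) =ᶠ[nhds x] fun y => q y * pderivP ω y := by
    filter_upwards [hxU] with y hy
    rw [hΦr y hy]
    ring
  have hp : (fun y => Δθ y.2 * pderivP Φ y) =ᶠ[nhds x] fun y => -(q y * pderivR ω y) := by
    filter_upwards [hxU] with y hy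
    rw [hΦp y hy]
    ring
  rw [hr.pderivR_eq, hp.pderivP_eq, pderivP_neg, ← sub_eq_add_neg,
    pderivR_mul_pderivP_sub_pderivP_mul_pderivR hq (hω.contDiffAt hxU), hΨq,
    pderivR_sqrt hq hqx, pderivP_sqrt hq hqx, hΦr x hx, hΦp x hx]
  have hs0 : √(q x) ≠ 0 := sqrt_ne_zero'.mpr (hpos x hx)
  field_simp
  rw [sq_sqrt (hpos x hx).le]
  ring

/-- If `Ψ = √(g·Δ_r·Δ_θ)` and `Φ` is a twist potential for `ω`
(`∂_r Φ = g·Δ_θ·∂_p ω`, `∂_p Φ = −g·Δ_r·∂_r ω`), then the first real Ernst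
equation `Ψ·(∂_r(Δ_r∂_rΦ) + ∂_p(Δ_θ∂_pΦ)) = 2Δ_r(∂_rΨ)(∂_rΦ) + 2Δ_θ(∂_pΨ)(∂_pΦ)`
holds identically on `U`. -/
theorem stmt_12 (U : Set (ℝ × ℝ)) (hU : IsOpen U)
    (Δr Δθ : ℝ → ℝ) (hΔr : Differentiable ℝ Δr) (hΔθ : Differentiable ℝ Δθ)
    (g : ℝ × ℝ → ℝ) (hg : ContDiffOn ℝ 1 g U)
    (ω : ℝ × ℝ → ℝ) (hω : ContDiffOn ℝ 2 ω U)
    (hpos : ∀ x ∈ U, 0 < g x * Δr x.1 * Δθ x.2)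
    (Ψ : ℝ × ℝ → ℝ) (hΨ : ∀ x : ℝ × ℝ, Ψ x = Real.sqrt (g x * Δr x.1 * Δθ x.2))
    (Φ : ℝ × ℝ → ℝ) (hΦdiff : ∀ x ∈ U, DifferentiableAt ℝ Φ x)
    (hΦr : ∀ x ∈ U, pderivR Φ x = g x * Δθ x.2 * pderivP ω x)
    (hΦp : ∀ x ∈ U, pderivP Φ x = -(g x * Δr x.1 * pderivR ω x)) :
    ∀ x ∈ U,
      Ψ x * (pderivR (fun y => Δr y.1 * pderivR Φ y) x
          + pderivP (fun y => Δθ y.2 * pderivP Φ y) x)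
        = 2 * Δr x.1 * pderivR Ψ x * pderivR Φ x
          + 2 * Δθ x.2 * pderivP Ψ x * pderivP Φ x :=
  stmt_12_general U hU Δr Δθ hΔr hΔθ g hg ω hω hpos Ψ hΨ Φ hΦr hΦp
end
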